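/- arXiv:0803.2769 — 2 statements merged into one kernel-verified Lean document; each statement's English description precedes it below -/
import Mathlib

section
/- (First family, spectral cover flat of degree n.) Regard the quotient S/J as an R-module via the algebra map φ : R → S followed by the quotient projection. Then the R-linear map from vector fields to S/J sending X = (X₁,…,Xₙ) : Fin n → R to the class of ι(X) = Σᵢ φ(Xᵢ)·yᵢ modulo J is a bijection (an isomorphism of R-modules). In particular S/J is a free R-module of rank n. -/
open MvPolynomial

/-- The canonical Poisson bracket on functions on the cotangent bundle of `ℂⁿ`:
`{f,g} = Σᵢ (∂f/∂yᵢ · ∂g/∂tᵢ − ∂f/∂tᵢ · ∂g/∂yᵢ)`, where `tᵢ` is the variable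
indexed by `Sum.inl i` and `yᵢ` the one indexed by `Sum.inr i`. -/
noncomputable def pb (n : ℕ) (f g : MvPolynomial (Fin n ⊕ Fin n) ℂ) :
    MvPolynomial (Fin n ⊕ Fin n) ℂ :=
  ∑ i : Fin n,
    (pderiv (Sum.inr i) f * pderiv (Sum.inl i) g -
     pderiv (Sum.inl i) f * pderiv (Sum.inr i) g)

/-- The embedding `φ : R → S` renaming each variable `i` to `Sum.inl i`. -/
noncomputable def phi (n : ℕ) :
    MvPolynomial (Fin n) ℂ →ₐ[ℂ] MvPolynomial (Fin n ⊕ Fin n) ℂ :=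
  rename Sum.inl

/-- The fiberwise-linear function `ι(X) = Σᵢ φ(Xᵢ)·yᵢ` associated to a vector
field `X : Fin n → R`. -/
noncomputable def iota (n : ℕ) (Xf : Fin n → MvPolynomial (Fin n) ℂ) :
    MvPolynomial (Fin n ⊕ Fin n) ℂ :=
  ∑ i : Fin n, phi n (Xf i) * MvPolynomial.X (Sum.inr i)

/-- The Lie bracket of vector fields: `[X,Y]ᵢ = Σⱼ (Xⱼ·∂Yᵢ/∂tⱼ − Yⱼ·∂Xᵢ/∂tⱼ)`. -/
noncomputable def lieVF (n : ℕ) (Xf Yf : Fin n → MvPolynomial (Fin n) ℂ) :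
    Fin n → MvPolynomial (Fin n) ℂ :=
  fun i => ∑ j : Fin n, (Xf j * pderiv j (Yf i) - Yf j * pderiv j (Xf i))

/-- The ideal of the first family (2.5.2): generated by `y₁ − 1` and all products
`(yᵢ − φ(ρᵢ))·(yⱼ − φ(ρⱼ))` (indices written `0,…,n−1`). -/
noncomputable def Jfam1 (n : ℕ) (hn : 0 < n) (ρ : Fin n → MvPolynomial (Fin n) ℂ) :
    Ideal (MvPolynomial (Fin n ⊕ Fin n) ℂ) :=
  Ideal.span ({MvPolynomial.X (Sum.inr (⟨0, hn⟩ : Fin n)) - 1} ∪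
    Set.range (fun p : Fin n × Fin n =>
      (MvPolynomial.X (Sum.inr p.1) - phi n (ρ p.1)) *
      (MvPolynomial.X (Sum.inr p.2) - phi n (ρ p.2))))

/- ### Auxiliary lemmas -/

/-- Evaluation at `y = ρ`: the algebra map `S → R` sending `tᵢ ↦ tᵢ`, `yᵢ ↦ ρᵢ`. -/
noncomputable def ev (n : ℕ) (ρ : Fin n → MvPolynomial (Fin n) ℂ) :
    MvPolynomial (Fin n ⊕ Fin n) ℂ →ₐ[ℂ] MvPolynomial (Fin n) ℂ :=
  aeval (Sum.elim MvPolynomial.X ρ)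

lemma ev_phi (n : ℕ) (ρ : Fin n → MvPolynomial (Fin n) ℂ) (r : MvPolynomial (Fin n) ℂ) :
    ev n ρ (phi n r) = r := by
  show aeval (Sum.elim MvPolynomial.X ρ) (rename Sum.inl r) = r
  rw [aeval_rename]
  simp [Function.comp_def]

lemma ev_X_inr (n : ℕ) (ρ : Fin n → MvPolynomial (Fin n) ℂ) (i : Fin n) :
    ev n ρ (MvPolynomial.X (Sum.inr i)) = ρ i := by simp [ev]

lemma pderiv_inr_phi (n : ℕ) (j : Fin n) (r : MvPolynomial (Fin n) ℂ) :
    pderiv (Sum.inr j) (phi n r) = 0 := by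
  induction r using MvPolynomial.induction_on with
  | C a => simp [phi]
  | add p q hp hq => simp [map_add, hp, hq]
  | mul_X p i hp => simp only [map_mul, pderiv_mul, hp, phi] at *; simp [hp]

lemma phi_C (n : ℕ) (a : ℂ) : phi n (C a) = C a := by simp [phi]

lemma pderiv_inr_iota (n : ℕ) (j : Fin n) (Xf : Fin n → MvPolynomial (Fin n) ℂ) :
    pderiv (Sum.inr j) (iota n Xf) = phi n (Xf j) := by
  rw [iota, map_sum, Finset.sum_eq_single j]
  · simp [pderiv_mul, pderiv_inr_phi, pderiv_X_self]
  · intro i _ hij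
    have : (Sum.inr i : Fin n ⊕ Fin n) ≠ Sum.inr j := by simp [hij]
    simp [pderiv_mul, pderiv_inr_phi, pderiv_X_of_ne this]
  · simp

lemma ev_iota (n : ℕ) (ρ : Fin n → MvPolynomial (Fin n) ℂ)
    (Xf : Fin n → MvPolynomial (Fin n) ℂ) :
    ev n ρ (iota n Xf) = ∑ i : Fin n, Xf i * ρ i := by
  rw [iota, map_sum]
  exact Finset.sum_congr rfl fun i _ => by rw [map_mul, ev_phi, ev_X_inr]

lemma iota_add (n : ℕ) (Xf Yf : Fin n → MvPolynomial (Fin n) ℂ) :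
    iota n (Xf + Yf) = iota n Xf + iota n Yf := by
  simp [iota, add_mul, Finset.sum_add_distrib]

lemma iota_sub (n : ℕ) (Xf Yf : Fin n → MvPolynomial (Fin n) ℂ) :
    iota n (Xf - Yf) = iota n Xf - iota n Yf := by
  simp [iota, sub_mul, Finset.sum_sub_distrib]

lemma iota_smul (n : ℕ) (r : MvPolynomial (Fin n) ℂ)
    (Xf : Fin n → MvPolynomial (Fin n) ℂ) :
    iota n (r • Xf) = phi n r * iota n Xf := by
  simp [iota, Finset.mul_sum, mul_assoc, smul_eq_mul]

lemma iota_sum (n : ℕ) {ι : Type*} (s : Finset ι) (F : ι → Fin n → MvPolynomial (Fin n) ℂ) :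
    iota n (∑ j ∈ s, F j) = ∑ j ∈ s, iota n (F j) := by
  simp only [iota, Finset.sum_apply, map_sum, Finset.sum_mul]
  exact Finset.sum_comm

/-- The "delta" vector field supported at `i` with value `r`. -/
noncomputable def evf (n : ℕ) (i : Fin n) (r : MvPolynomial (Fin n) ℂ) :
    Fin n → MvPolynomial (Fin n) ℂ := fun k => if k = i then r else 0

lemma iota_evf (n : ℕ) (i : Fin n) (r : MvPolynomial (Fin n) ℂ) :
    iota n (evf n i r) = phi n r * MvPolynomial.X (Sum.inr i) := by
  rw [iota, Finset.sum_eq_single i]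
  · simp [evf]
  · intro k _ hk; simp [evf, hk]
  · simp

lemma J_props (n : ℕ) (hn : 0 < n) (ρ : Fin n → MvPolynomial (Fin n) ℂ)
    (hρ1 : ρ ⟨0, hn⟩ = 1) {g : MvPolynomial (Fin n ⊕ Fin n) ℂ}
    (hg : g ∈ Jfam1 n hn ρ) :
    ev n ρ g = 0 ∧ ∀ j : Fin n, j ≠ ⟨0, hn⟩ → ev n ρ (pderiv (Sum.inr j) g) = 0 := by
  rw [Jfam1] at hg
  refine Submodule.span_induction ?_ ?_ ?_ ?_ hg
  · rintro x (rfl | ⟨p, rfl⟩)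
    · constructor
      · rw [map_sub, ev_X_inr, hρ1, map_one, sub_self]
      · intro j hj
        have : (Sum.inr j : Fin n ⊕ Fin n) ≠ Sum.inr (⟨0, hn⟩ : Fin n) := by simp [hj]
        rw [map_sub, pderiv_X_of_ne (Ne.symm this)]
        simp
    · have ha : ev n ρ (MvPolynomial.X (Sum.inr p.1) - phi n (ρ p.1)) = 0 := by
        rw [map_sub, ev_X_inr, ev_phi, sub_self]
      have hb : ev n ρ (MvPolynomial.X (Sum.inr p.2) - phi n (ρ p.2)) = 0 := by
        rw [map_sub, ev_X_inr, ev_phi, sub_self]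
      constructor
      · rw [map_mul, ha, zero_mul]
      · intro j hj
        rw [pderiv_mul, map_add, map_mul, map_mul, ha, hb, mul_zero, zero_mul, add_zero]
  · simp
  · intro x y _ _ hx hy
    exact ⟨by rw [map_add, hx.1, hy.1, add_zero],
      fun j hj => by rw [map_add, map_add, hx.2 j hj, hy.2 j hj, add_zero]⟩
  · intro a x _ hx
    refine ⟨by rw [smul_eq_mul, map_mul, hx.1, mul_zero], fun j hj => ?_⟩
    rw [smul_eq_mul, pderiv_mul, map_add, map_mul, map_mul, hx.1, hx.2 j hj,
      mul_zero, mul_zero, add_zero]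

/-- The vector field whose `ι` is congruent to `yᵢ·yⱼ` mod `J`. -/
noncomputable def wvf (n : ℕ) (hn : 0 < n) (ρ : Fin n → MvPolynomial (Fin n) ℂ)
    (i j : Fin n) : Fin n → MvPolynomial (Fin n) ℂ :=
  evf n i (ρ j) + evf n j (ρ i) - evf n ⟨0, hn⟩ (ρ i * ρ j)

lemma key_mem (n : ℕ) (hn : 0 < n) (ρ : Fin n → MvPolynomial (Fin n) ℂ) (i j : Fin n) :
    MvPolynomial.X (Sum.inr i) * MvPolynomial.X (Sum.inr j) - iota n (wvf n hn ρ i j)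
      ∈ Jfam1 n hn ρ := by
  have h1 : (MvPolynomial.X (Sum.inr i) - phi n (ρ i)) *
      (MvPolynomial.X (Sum.inr j) - phi n (ρ j)) ∈ Jfam1 n hn ρ :=
    Ideal.subset_span (Or.inr ⟨(i, j), rfl⟩)
  have h0 : (MvPolynomial.X (Sum.inr (⟨0, hn⟩ : Fin n)) - 1 :
      MvPolynomial (Fin n ⊕ Fin n) ℂ) ∈ Jfam1 n hn ρ :=
    Ideal.subset_span (Or.inl rfl)
  have hmem := (Jfam1 n hn ρ).add_mem h1
    ((Jfam1 n hn ρ).mul_mem_left (phi n (ρ i) * phi n (ρ j)) h0)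
  convert hmem using 1
  have : iota n (wvf n hn ρ i j) =
      phi n (ρ j) * MvPolynomial.X (Sum.inr i) + phi n (ρ i) * MvPolynomial.X (Sum.inr j)
        - phi n (ρ i) * phi n (ρ j) * MvPolynomial.X (Sum.inr ⟨0, hn⟩) := by
    rw [wvf, iota_sub, iota_add, iota_evf, iota_evf, iota_evf, map_mul]
  rw [this]
  ring

/-- First family (2.5.2): the spectral cover is flat of degree `n`: the map
`X ↦ ι(X) mod J` from vector fields to `S/J` is an `R`-module isomorphism
(where `S/J` is an `R`-module via `φ` followed by the projection). -/
theorem stmt_11 (n : ℕ) (hn : 0 < n) (ρ : Fin n → MvPolynomial (Fin n) ℂ)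
    (hρ1 : ρ ⟨0, hn⟩ = 1)
    (hρd : ∀ i : Fin n, pderiv (⟨0, hn⟩ : Fin n) (ρ i) = 0) :
    Function.Bijective (fun Xf : Fin n → MvPolynomial (Fin n) ℂ =>
      Ideal.Quotient.mk (Jfam1 n hn ρ) (iota n Xf)) ∧
    (∀ Xf Yf : Fin n → MvPolynomial (Fin n) ℂ,
      Ideal.Quotient.mk (Jfam1 n hn ρ) (iota n (Xf + Yf)) =
        Ideal.Quotient.mk (Jfam1 n hn ρ) (iota n Xf) +
        Ideal.Quotient.mk (Jfam1 n hn ρ) (iota n Yf)) ∧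
    (∀ (r : MvPolynomial (Fin n) ℂ) (Xf : Fin n → MvPolynomial (Fin n) ℂ),
      Ideal.Quotient.mk (Jfam1 n hn ρ) (iota n (r • Xf)) =
        Ideal.Quotient.mk (Jfam1 n hn ρ) (phi n r) *
        Ideal.Quotient.mk (Jfam1 n hn ρ) (iota n Xf)) := by
  refine ⟨⟨?_, ?_⟩, ?_, ?_⟩
  · -- injectivity
    intro Xf Yf h
    simp only at h
    have hmem : iota n Xf - iota n Yf ∈ Jfam1 n hn ρ := by
      rwa [Ideal.Quotient.eq] at h
    rw [← iota_sub] at hmem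
    obtain ⟨h1, h2⟩ := J_props n hn ρ hρ1 hmem
    have hD : ∀ j : Fin n, j ≠ ⟨0, hn⟩ → (Xf - Yf) j = 0 := by
      intro j hj
      have := h2 j hj
      rwa [pderiv_inr_iota, ev_phi] at this
    have hD0 : (Xf - Yf) ⟨0, hn⟩ = 0 := by
      rw [ev_iota, Finset.sum_eq_single (⟨0, hn⟩ : Fin n)] at h1
      · rwa [hρ1, mul_one] at h1
      · intro i _ hi; rw [hD i hi, zero_mul]
      · simp
    have hXY : Xf - Yf = 0 := by
      funext j
      by_cases hj : j = ⟨0, hn⟩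
      · rw [hj]; exact hD0
      · exact hD j hj
    have := sub_eq_zero.mp hXY
    exact this
  · -- surjectivity
    have hsub : ∀ g : MvPolynomial (Fin n ⊕ Fin n) ℂ,
        ∃ Xf, g - iota n Xf ∈ Jfam1 n hn ρ := by
      intro g
      induction g using MvPolynomial.induction_on with
      | C a =>
        refine ⟨evf n ⟨0, hn⟩ (C a), ?_⟩
        rw [iota_evf, phi_C]
        have h0 : (MvPolynomial.X (Sum.inr (⟨0, hn⟩ : Fin n)) - 1 :
            MvPolynomial (Fin n ⊕ Fin n) ℂ) ∈ Jfam1 n hn ρ :=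
          Ideal.subset_span (Or.inl rfl)
        have heq : (C a : MvPolynomial (Fin n ⊕ Fin n) ℂ) -
            C a * MvPolynomial.X (Sum.inr ⟨0, hn⟩) =
            (-(C a)) * (MvPolynomial.X (Sum.inr ⟨0, hn⟩) - 1) := by ring
        rw [heq]
        exact (Jfam1 n hn ρ).mul_mem_left _ h0
      | add p q hp hq =>
        obtain ⟨Xp, hXp⟩ := hp
        obtain ⟨Xq, hXq⟩ := hq
        refine ⟨Xp + Xq, ?_⟩
        rw [iota_add]
        have := (Jfam1 n hn ρ).add_mem hXp hXq
        convert this using 1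
        ring
      | mul_X p s hp =>
        obtain ⟨Xp, hXp⟩ := hp
        cases s with
        | inl i =>
          refine ⟨fun k => Xp k * MvPolynomial.X i, ?_⟩
          have hiota : iota n (fun k => Xp k * MvPolynomial.X i) =
              iota n Xp * MvPolynomial.X (Sum.inl i) := by
            rw [iota, iota, Finset.sum_mul]
            refine Finset.sum_congr rfl fun k _ => ?_
            rw [map_mul]
            have : phi n (MvPolynomial.X i) = MvPolynomial.X (Sum.inl i) := by simp [phi]
            rw [this]
            ring
          rw [hiota]
          have := (Jfam1 n hn ρ).mul_mem_right (MvPolynomial.X (Sum.inl i)) hXp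
          rwa [sub_mul] at this
        | inr i =>
          refine ⟨∑ j : Fin n, Xp j • wvf n hn ρ j i, ?_⟩
          have hmem1 : (p - iota n Xp) * MvPolynomial.X (Sum.inr i) ∈ Jfam1 n hn ρ :=
            (Jfam1 n hn ρ).mul_mem_right _ hXp
          have hmem2 : iota n Xp * MvPolynomial.X (Sum.inr i) -
              iota n (∑ j : Fin n, Xp j • wvf n hn ρ j i) ∈ Jfam1 n hn ρ := by
            rw [iota_sum]
            have heq : iota n Xp * MvPolynomial.X (Sum.inr i) -
                ∑ j : Fin n, iota n (Xp j • wvf n hn ρ j i) =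
                ∑ j : Fin n, phi n (Xp j) *
                  (MvPolynomial.X (Sum.inr j) * MvPolynomial.X (Sum.inr i) -
                    iota n (wvf n hn ρ j i)) := by
              rw [iota, Finset.sum_mul, ← Finset.sum_sub_distrib]
              refine Finset.sum_congr rfl fun j _ => ?_
              rw [iota_smul, mul_sub]
              ring
            rw [heq]
            exact Submodule.sum_mem _ fun j _ =>
              (Jfam1 n hn ρ).mul_mem_left _ (key_mem n hn ρ j i)
          have := (Jfam1 n hn ρ).add_mem hmem1 hmem2
          convert this using 1
          ring
    intro q
    obtain ⟨g, rfl⟩ := Ideal.Quotient.mk_surjective q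
    obtain ⟨Xf, h⟩ := hsub g
    refine ⟨Xf, ?_⟩
    simp only
    rw [Ideal.Quotient.eq]
    simpa using (Jfam1 n hn ρ).neg_mem h
  · intro Xf Yf
    rw [iota_add, map_add]
  · intro r Xf
    rw [iota_smul, map_mul]
end

section
/- (Second family, stability.) The ideal J is Poisson-stable: for all a, b ∈ J, the canonical Poisson bracket {a,b} lies in J. -/
open MvPolynomial

/-- `ρ₂ := t₃·y₁ + Σ_{k=3}^{n−1} (k−1)·t_{k+1}·y_k` of the second family (2.5.3),
written in `0`-based indexing: `ρ₂ = t₂·y₀ + Σ_{k=2}^{n−2} k·t_{k+1}·y_k`. -/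
noncomputable def rho2 (n : ℕ) (hn : 3 ≤ n) : MvPolynomial (Fin n ⊕ Fin n) ℂ :=
  MvPolynomial.X (Sum.inl (⟨2, by omega⟩ : Fin n)) *
    MvPolynomial.X (Sum.inr (⟨0, by omega⟩ : Fin n)) +
  ∑ k ∈ (Finset.Ico 2 (n - 1)).attach,
    MvPolynomial.C ((k.1 : ℂ)) *
      MvPolynomial.X (Sum.inl (⟨k.1 + 1, by
        have := Finset.mem_Ico.mp k.2; omega⟩ : Fin n)) *
      MvPolynomial.X (Sum.inr (⟨k.1, by
        have := Finset.mem_Ico.mp k.2; omega⟩ : Fin n))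

/-- The ideal of the second family (2.5.3): generated by `y₁ − 1`, `(y₂ − ρ₂)²`,
`(y₂ − ρ₂)·y₃`, `y₃^{n−1}`, and `y_k − y₃^{k−2}` for `k = 4,…,n`
(all written in `0`-based indexing). -/
noncomputable def Jfam2 (n : ℕ) (hn : 3 ≤ n) :
    Ideal (MvPolynomial (Fin n ⊕ Fin n) ℂ) :=
  Ideal.span ({MvPolynomial.X (Sum.inr (⟨0, by omega⟩ : Fin n)) - 1,
    (MvPolynomial.X (Sum.inr (⟨1, by omega⟩ : Fin n)) - rho2 n hn) ^ 2,
    (MvPolynomial.X (Sum.inr (⟨1, by omega⟩ : Fin n)) - rho2 n hn) *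
      MvPolynomial.X (Sum.inr (⟨2, by omega⟩ : Fin n)),
    MvPolynomial.X (Sum.inr (⟨2, by omega⟩ : Fin n)) ^ (n - 1)} ∪
    Set.range (fun k : (Finset.Ico 3 n : Finset ℕ) =>
      MvPolynomial.X (Sum.inr (⟨k.1, (Finset.mem_Ico.mp k.2).2⟩ : Fin n)) -
      MvPolynomial.X (Sum.inr (⟨2, by omega⟩ : Fin n)) ^ (k.1 - 1)))

section PBAux

open MvPolynomial

variable {n : ℕ}

lemma pb_antisymm (f g : MvPolynomial (Fin n ⊕ Fin n) ℂ) :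
    pb n f g = -pb n g f := by
  unfold pb
  rw [← Finset.sum_neg_distrib]
  exact Finset.sum_congr rfl fun i _ => by ring

lemma pb_self (f : MvPolynomial (Fin n ⊕ Fin n) ℂ) : pb n f f = 0 := by
  unfold pb
  exact Finset.sum_eq_zero fun i _ => by ring

lemma pb_zero_left (g : MvPolynomial (Fin n ⊕ Fin n) ℂ) : pb n 0 g = 0 := by
  unfold pb; simp

lemma pb_zero_right (f : MvPolynomial (Fin n ⊕ Fin n) ℂ) : pb n f 0 = 0 := by
  unfold pb; simp

lemma pb_add_right (f g h : MvPolynomial (Fin n ⊕ Fin n) ℂ) :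
    pb n f (g + h) = pb n f g + pb n f h := by
  unfold pb
  rw [← Finset.sum_add_distrib]
  exact Finset.sum_congr rfl fun i _ => by rw [map_add, map_add]; ring

lemma pb_sub_right (f g h : MvPolynomial (Fin n ⊕ Fin n) ℂ) :
    pb n f (g - h) = pb n f g - pb n f h := by
  unfold pb
  rw [← Finset.sum_sub_distrib]
  exact Finset.sum_congr rfl fun i _ => by rw [map_sub, map_sub]; ring

lemma pb_mul_right (f g h : MvPolynomial (Fin n ⊕ Fin n) ℂ) :
    pb n f (g * h) = g * pb n f h + h * pb n f g := by
  unfold pb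
  rw [Finset.mul_sum, Finset.mul_sum, ← Finset.sum_add_distrib]
  exact Finset.sum_congr rfl fun i _ => by rw [pderiv_mul, pderiv_mul]; ring

lemma pb_pow_right (f g : MvPolynomial (Fin n ⊕ Fin n) ℂ) (m : ℕ) :
    pb n f (g ^ m) = (m : MvPolynomial (Fin n ⊕ Fin n) ℂ) * g ^ (m - 1) * pb n f g := by
  unfold pb
  rw [Finset.mul_sum]
  exact Finset.sum_congr rfl fun i _ => by
    rw [pderiv_pow, pderiv_pow]; ring

lemma pb_add_left (f g h : MvPolynomial (Fin n ⊕ Fin n) ℂ) :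
    pb n (f + g) h = pb n f h + pb n g h := by
  rw [pb_antisymm (f + g) h, pb_add_right, pb_antisymm h f, pb_antisymm h g]; ring

lemma pb_mul_left (f g h : MvPolynomial (Fin n ⊕ Fin n) ℂ) :
    pb n (f * g) h = f * pb n g h + g * pb n f h := by
  rw [pb_antisymm (f * g) h, pb_mul_right, pb_antisymm h f, pb_antisymm h g]; ring

lemma pb_one_right (f : MvPolynomial (Fin n ⊕ Fin n) ℂ) : pb n f 1 = 0 := by
  unfold pb
  exact Finset.sum_eq_zero fun i _ => by rw [pderiv_one, pderiv_one]; ring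

lemma pb_X_inr_right (f : MvPolynomial (Fin n ⊕ Fin n) ℂ) (j : Fin n) :
    pb n f (X (Sum.inr j)) = -pderiv (Sum.inl j) f := by
  unfold pb
  rw [Finset.sum_eq_single j]
  · rw [pderiv_X_of_ne (show (Sum.inr j : Fin n ⊕ Fin n) ≠ Sum.inl j by simp),
      pderiv_X_self]
    ring
  · intro i _ hij
    rw [pderiv_X_of_ne (show (Sum.inr j : Fin n ⊕ Fin n) ≠ Sum.inl i by simp),
      pderiv_X_of_ne (show (Sum.inr j : Fin n ⊕ Fin n) ≠ Sum.inr i by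
        exact fun h => hij (Sum.inr_injective h).symm)]
    ring
  · exact fun h => absurd (Finset.mem_univ j) h

/-- "Pure in the y-variables": all `t`-derivatives vanish. -/
def YP (n : ℕ) (f : MvPolynomial (Fin n ⊕ Fin n) ℂ) : Prop :=
  ∀ i : Fin n, pderiv (Sum.inl i) f = 0

lemma YP_X (j : Fin n) : YP n (X (Sum.inr j)) := fun i =>
  pderiv_X_of_ne (by simp)

lemma YP_one : YP n (1 : MvPolynomial (Fin n ⊕ Fin n) ℂ) := fun _ => pderiv_one

lemma YP_sub {f g : MvPolynomial (Fin n ⊕ Fin n) ℂ} (hf : YP n f) (hg : YP n g) :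
    YP n (f - g) := fun i => by rw [map_sub, hf i, hg i, sub_zero]

lemma YP_pow {f : MvPolynomial (Fin n ⊕ Fin n) ℂ} (hf : YP n f) (m : ℕ) :
    YP n (f ^ m) := fun i => by rw [pderiv_pow, hf i, mul_zero]

lemma pb_YP {f g : MvPolynomial (Fin n ⊕ Fin n) ℂ} (hf : YP n f) (hg : YP n g) :
    pb n f g = 0 := by
  unfold pb
  exact Finset.sum_eq_zero fun i _ => by rw [hf i, hg i]; ring

end PBAux
section DRho

open MvPolynomial

lemma drho_zero (n : ℕ) (hn : 3 ≤ n) :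
    pderiv (Sum.inl (⟨0, by omega⟩ : Fin n)) (rho2 n hn) = 0 := by
  unfold rho2
  rw [map_add, map_sum]
  rw [pderiv_mul,
    pderiv_X_of_ne (show (Sum.inl (⟨2, by omega⟩ : Fin n) : Fin n ⊕ Fin n) ≠
      Sum.inl (⟨0, by omega⟩ : Fin n) by simp [Fin.ext_iff]),
    pderiv_X_of_ne (show (Sum.inr (⟨0, by omega⟩ : Fin n) : Fin n ⊕ Fin n) ≠
      Sum.inl (⟨0, by omega⟩ : Fin n) by simp)]
  rw [Finset.sum_eq_zero]
  · ring
  intro k _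
  have hk := Finset.mem_Ico.mp k.2
  rw [pderiv_mul, pderiv_mul, pderiv_C,
    pderiv_X_of_ne (show (Sum.inl (⟨k.1 + 1, by omega⟩ : Fin n) : Fin n ⊕ Fin n) ≠
      Sum.inl (⟨0, by omega⟩ : Fin n) by simp [Fin.ext_iff]),
    pderiv_X_of_ne (show (Sum.inr (⟨k.1, by omega⟩ : Fin n) : Fin n ⊕ Fin n) ≠
      Sum.inl (⟨0, by omega⟩ : Fin n) by simp)]
  ring

lemma drho_two (n : ℕ) (hn : 3 ≤ n) :
    pderiv (Sum.inl (⟨2, by omega⟩ : Fin n)) (rho2 n hn) =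
      X (Sum.inr (⟨0, by omega⟩ : Fin n)) := by
  unfold rho2
  rw [map_add, map_sum]
  rw [pderiv_mul, pderiv_X_self,
    pderiv_X_of_ne (show (Sum.inr (⟨0, by omega⟩ : Fin n) : Fin n ⊕ Fin n) ≠
      Sum.inl (⟨2, by omega⟩ : Fin n) by simp)]
  rw [Finset.sum_eq_zero]
  · ring
  intro k _
  have hk := Finset.mem_Ico.mp k.2
  rw [pderiv_mul, pderiv_mul, pderiv_C,
    pderiv_X_of_ne (show (Sum.inl (⟨k.1 + 1, by omega⟩ : Fin n) : Fin n ⊕ Fin n) ≠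
      Sum.inl (⟨2, by omega⟩ : Fin n) by simp [Fin.ext_iff]; omega),
    pderiv_X_of_ne (show (Sum.inr (⟨k.1, by omega⟩ : Fin n) : Fin n ⊕ Fin n) ≠
      Sum.inl (⟨2, by omega⟩ : Fin n) by simp)]
  ring

lemma drho_big (n : ℕ) (hn : 3 ≤ n) (j : ℕ) (h3 : 3 ≤ j) (hj : j < n) :
    pderiv (Sum.inl (⟨j, hj⟩ : Fin n)) (rho2 n hn) =
      C ((j : ℂ) - 1) * X (Sum.inr (⟨j - 1, by omega⟩ : Fin n)) := by
  unfold rho2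
  rw [map_add, map_sum]
  rw [pderiv_mul,
    pderiv_X_of_ne (show (Sum.inl (⟨2, by omega⟩ : Fin n) : Fin n ⊕ Fin n) ≠
      Sum.inl (⟨j, hj⟩ : Fin n) by simp [Fin.ext_iff]; omega),
    pderiv_X_of_ne (show (Sum.inr (⟨0, by omega⟩ : Fin n) : Fin n ⊕ Fin n) ≠
      Sum.inl (⟨j, hj⟩ : Fin n) by simp)]
  rw [Finset.sum_eq_single (⟨j - 1, Finset.mem_Ico.mpr ⟨by omega, by omega⟩⟩ :
      {x // x ∈ Finset.Ico 2 (n - 1)})]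
  · rw [pderiv_mul, pderiv_mul, pderiv_C]
    have he : (⟨j - 1 + 1, by omega⟩ : Fin n) = ⟨j, hj⟩ := by
      ext; simp; omega
    rw [he, pderiv_X_self,
      pderiv_X_of_ne (show (Sum.inr (⟨j - 1, by omega⟩ : Fin n) : Fin n ⊕ Fin n) ≠
        Sum.inl (⟨j, hj⟩ : Fin n) by simp)]
    have hc : ((j - 1 : ℕ) : ℂ) = (j : ℂ) - 1 := by
      rw [Nat.cast_sub (by omega), Nat.cast_one]
    rw [hc]
    ring
  · intro k _ hkne
    have hk := Finset.mem_Ico.mp k.2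
    have hkv : k.1 ≠ j - 1 := fun h => hkne (Subtype.ext h)
    rw [pderiv_mul, pderiv_mul, pderiv_C,
      pderiv_X_of_ne (show (Sum.inl (⟨k.1 + 1, by omega⟩ : Fin n) : Fin n ⊕ Fin n) ≠
        Sum.inl (⟨j, hj⟩ : Fin n) by simp [Fin.ext_iff]; omega),
      pderiv_X_of_ne (show (Sum.inr (⟨k.1, by omega⟩ : Fin n) : Fin n ⊕ Fin n) ≠
        Sum.inl (⟨j, hj⟩ : Fin n) by simp)]
    ring
  · intro h
    exact absurd (Finset.mem_attach _ _) h

end DRho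
section Main

open MvPolynomial

/-- `u := y₁ - ρ₂`. -/
noncomputable def uP (n : ℕ) (hn : 3 ≤ n) : MvPolynomial (Fin n ⊕ Fin n) ℂ :=
  MvPolynomial.X (Sum.inr (⟨1, by omega⟩ : Fin n)) - rho2 n hn

/-- The generating set of `Jfam2`. -/
noncomputable def genSet (n : ℕ) (hn : 3 ≤ n) : Set (MvPolynomial (Fin n ⊕ Fin n) ℂ) :=
  {MvPolynomial.X (Sum.inr (⟨0, by omega⟩ : Fin n)) - 1,
    uP n hn ^ 2,
    uP n hn * MvPolynomial.X (Sum.inr (⟨2, by omega⟩ : Fin n)),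
    MvPolynomial.X (Sum.inr (⟨2, by omega⟩ : Fin n)) ^ (n - 1)} ∪
    Set.range (fun k : (Finset.Ico 3 n : Finset ℕ) =>
      MvPolynomial.X (Sum.inr (⟨k.1, (Finset.mem_Ico.mp k.2).2⟩ : Fin n)) -
      MvPolynomial.X (Sum.inr (⟨2, by omega⟩ : Fin n)) ^ (k.1 - 1))

lemma Jfam2_eq (n : ℕ) (hn : 3 ≤ n) : Jfam2 n hn = Ideal.span (genSet n hn) := rfl

lemma pb_u_X (n : ℕ) (hn : 3 ≤ n) (j : Fin n) :
    pb n (uP n hn) (X (Sum.inr j)) = pderiv (Sum.inl j) (rho2 n hn) := by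
  rw [pb_X_inr_right]
  unfold uP
  rw [map_sub,
    pderiv_X_of_ne (show (Sum.inr (⟨1, by omega⟩ : Fin n) : Fin n ⊕ Fin n) ≠ Sum.inl j
      by simp),
    zero_sub, neg_neg]

lemma pb_u_A (n : ℕ) (hn : 3 ≤ n) :
    pb n (uP n hn) (X (Sum.inr (⟨0, by omega⟩ : Fin n)) - 1) = 0 := by
  rw [pb_sub_right, pb_one_right, pb_u_X, drho_zero, sub_zero]

lemma pb_u_y2 (n : ℕ) (hn : 3 ≤ n) :
    pb n (uP n hn) (X (Sum.inr (⟨2, by omega⟩ : Fin n))) =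
      X (Sum.inr (⟨0, by omega⟩ : Fin n)) := by
  rw [pb_u_X, drho_two]

lemma pb_u_B (n : ℕ) (hn : 3 ≤ n) : pb n (uP n hn) (uP n hn ^ 2) = 0 := by
  rw [pb_pow_right, pb_self, mul_zero]

lemma pb_u_C (n : ℕ) (hn : 3 ≤ n) :
    pb n (uP n hn) (uP n hn * X (Sum.inr (⟨2, by omega⟩ : Fin n))) =
      uP n hn * X (Sum.inr (⟨0, by omega⟩ : Fin n)) := by
  rw [pb_mul_right, pb_u_y2, pb_self, mul_zero, add_zero]

lemma pb_u_D (n : ℕ) (hn : 3 ≤ n) :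
    pb n (uP n hn) (X (Sum.inr (⟨2, by omega⟩ : Fin n)) ^ (n - 1)) =
      ((n - 1 : ℕ) : MvPolynomial (Fin n ⊕ Fin n) ℂ) *
        X (Sum.inr (⟨2, by omega⟩ : Fin n)) ^ (n - 2) *
        X (Sum.inr (⟨0, by omega⟩ : Fin n)) := by
  rw [pb_pow_right, pb_u_y2, show n - 1 - 1 = n - 2 from by omega]

lemma pb_u_E (n : ℕ) (hn : 3 ≤ n) (k : ℕ) (h3 : 3 ≤ k) (hk : k < n) :
    pb n (uP n hn) (X (Sum.inr (⟨k, hk⟩ : Fin n)) -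
        X (Sum.inr (⟨2, by omega⟩ : Fin n)) ^ (k - 1)) =
      C ((k : ℂ) - 1) *
        (X (Sum.inr (⟨k - 1, by omega⟩ : Fin n)) -
          X (Sum.inr (⟨2, by omega⟩ : Fin n)) ^ (k - 2) *
            X (Sum.inr (⟨0, by omega⟩ : Fin n))) := by
  rw [pb_sub_right, pb_pow_right, pb_u_y2, pb_u_X, drho_big n hn k h3 hk,
    show k - 1 - 1 = k - 2 from by omega]
  have hc : ((k - 1 : ℕ) : MvPolynomial (Fin n ⊕ Fin n) ℂ) = C ((k : ℂ) - 1) := by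
    rw [show ((k - 1 : ℕ) : MvPolynomial (Fin n ⊕ Fin n) ℂ) = C ((k - 1 : ℕ) : ℂ) from
        (map_natCast (C : ℂ →+* MvPolynomial (Fin n ⊕ Fin n) ℂ) (k - 1)).symm,
      Nat.cast_sub (by omega : 1 ≤ k), Nat.cast_one]
  rw [hc]
  ring

lemma key (n : ℕ) (hn : 3 ≤ n) (x : MvPolynomial (Fin n ⊕ Fin n) ℂ)
    (hx : x ∈ genSet n hn) (y : MvPolynomial (Fin n ⊕ Fin n) ℂ)
    (hy : y ∈ genSet n hn) : pb n x y ∈ Ideal.span (genSet n hn) := by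
  set J := Ideal.span (genSet n hn) with hJ
  -- set-level memberships of the generators
  have gA : (X (Sum.inr (⟨0, by omega⟩ : Fin n)) - 1 :
      MvPolynomial (Fin n ⊕ Fin n) ℂ) ∈ genSet n hn :=
    Set.mem_union_left _ (Set.mem_insert _ _)
  have gB : uP n hn ^ 2 ∈ genSet n hn :=
    Set.mem_union_left _ (Set.mem_insert_of_mem _ (Set.mem_insert _ _))
  have gC : uP n hn * X (Sum.inr (⟨2, by omega⟩ : Fin n)) ∈ genSet n hn :=
    Set.mem_union_left _
      (Set.mem_insert_of_mem _ (Set.mem_insert_of_mem _ (Set.mem_insert _ _)))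
  have gD : (X (Sum.inr (⟨2, by omega⟩ : Fin n)) ^ (n - 1) :
      MvPolynomial (Fin n ⊕ Fin n) ℂ) ∈ genSet n hn :=
    Set.mem_union_left _
      (Set.mem_insert_of_mem _ (Set.mem_insert_of_mem _ (Set.mem_insert_of_mem _ rfl)))
  have memA : (X (Sum.inr (⟨0, by omega⟩ : Fin n)) - 1 :
      MvPolynomial (Fin n ⊕ Fin n) ℂ) ∈ J := Ideal.subset_span gA
  have memB : uP n hn ^ 2 ∈ J := Ideal.subset_span gB
  have memC : uP n hn * X (Sum.inr (⟨2, by omega⟩ : Fin n)) ∈ J := Ideal.subset_span gC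
  have memD : (X (Sum.inr (⟨2, by omega⟩ : Fin n)) ^ (n - 1) :
      MvPolynomial (Fin n ⊕ Fin n) ℂ) ∈ J := Ideal.subset_span gD
  have memE : ∀ (k : ℕ) (h3 : 3 ≤ k) (hk : k < n),
      X (Sum.inr (⟨k, hk⟩ : Fin n)) -
        X (Sum.inr (⟨2, by omega⟩ : Fin n)) ^ (k - 1) ∈ J := fun k h3 hk =>
    Ideal.subset_span (Set.mem_union_right _
      ⟨⟨k, Finset.mem_Ico.mpr ⟨h3, hk⟩⟩, rfl⟩)
  have memE' : ∀ (k : ℕ) (h2 : 2 ≤ k) (hk : k < n),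
      X (Sum.inr (⟨k, hk⟩ : Fin n)) -
        X (Sum.inr (⟨2, by omega⟩ : Fin n)) ^ (k - 1) ∈ J := by
    intro k h2 hk
    rcases Nat.lt_or_ge k 3 with h | h
    · have hk2 : k = 2 := by omega
      subst hk2
      rw [show (2 : ℕ) - 1 = 1 from rfl, pow_one, sub_self]
      exact zero_mem J
    · exact memE k h hk
  -- Y-purity of the non-`u` generators
  have ypA : YP n (X (Sum.inr (⟨0, by omega⟩ : Fin n)) - 1) :=
    YP_sub (YP_X _) YP_one
  have ypD : YP n (X (Sum.inr (⟨2, by omega⟩ : Fin n)) ^ (n - 1)) :=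
    YP_pow (YP_X _) _
  have ypE : ∀ (k : ℕ) (hk : k < n),
      YP n (X (Sum.inr (⟨k, hk⟩ : Fin n)) -
        X (Sum.inr (⟨2, by omega⟩ : Fin n)) ^ (k - 1)) := fun k hk =>
    YP_sub (YP_X _) (YP_pow (YP_X _) _)
  have ypy2 : YP n (X (Sum.inr (⟨2, by omega⟩ : Fin n))) := YP_X _
  have hBleft : ∀ g, pb n (uP n hn ^ 2) g = 2 * uP n hn * pb n (uP n hn) g := by
    intro g
    rw [pb_antisymm (uP n hn ^ 2) g, pb_pow_right, pb_antisymm g (uP n hn)]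
    simp only [show (2 : ℕ) - 1 = 1 from rfl, pow_one]
    push_cast
    ring
  have hCleft : ∀ g, pb n (uP n hn * X (Sum.inr (⟨2, by omega⟩ : Fin n))) g =
      uP n hn * pb n (X (Sum.inr (⟨2, by omega⟩ : Fin n))) g +
        X (Sum.inr (⟨2, by omega⟩ : Fin n)) * pb n (uP n hn) g :=
    fun g => pb_mul_left _ _ _
  -- main computation: bracketing `u²` against each generator
  have mainB : ∀ z ∈ genSet n hn, pb n (uP n hn ^ 2) z ∈ J := by
    intro z hz
    simp only [genSet, Set.mem_union, Set.mem_insert_iff, Set.mem_singleton_iff,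
      Set.mem_range] at hz
    rcases hz with (rfl | rfl | rfl | rfl) | ⟨k, rfl⟩
    · rw [hBleft, pb_u_A n hn, mul_zero]; exact zero_mem J
    · rw [pb_self]; exact zero_mem J
    · rw [hBleft, pb_u_C n hn]
      have heq : 2 * uP n hn * (uP n hn * X (Sum.inr (⟨0, by omega⟩ : Fin n))) =
          (2 * X (Sum.inr (⟨0, by omega⟩ : Fin n))) * uP n hn ^ 2 := by ring
      rw [heq]
      exact Ideal.mul_mem_left _ _ memB
    · rw [hBleft, pb_u_D n hn]
      have hp : (X (Sum.inr (⟨2, by omega⟩ : Fin n)) ^ (n - 2) :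
          MvPolynomial (Fin n ⊕ Fin n) ℂ) =
          X (Sum.inr (⟨2, by omega⟩ : Fin n)) ^ (n - 3) *
            X (Sum.inr (⟨2, by omega⟩ : Fin n)) := by
        rw [← pow_succ, show n - 3 + 1 = n - 2 from by omega]
      have heq : 2 * uP n hn * (((n - 1 : ℕ) : MvPolynomial (Fin n ⊕ Fin n) ℂ) *
            X (Sum.inr (⟨2, by omega⟩ : Fin n)) ^ (n - 2) *
            X (Sum.inr (⟨0, by omega⟩ : Fin n))) =
          (2 * ((n - 1 : ℕ) : MvPolynomial (Fin n ⊕ Fin n) ℂ) *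
            X (Sum.inr (⟨0, by omega⟩ : Fin n)) *
            X (Sum.inr (⟨2, by omega⟩ : Fin n)) ^ (n - 3)) *
          (uP n hn * X (Sum.inr (⟨2, by omega⟩ : Fin n))) := by
        rw [hp]; ring
      rw [heq]
      exact Ideal.mul_mem_left _ _ memC
    · obtain ⟨kk, hkmem⟩ := k
      have hb := Finset.mem_Ico.mp hkmem
      rw [hBleft, pb_u_E n hn kk hb.1 hb.2]
      have hmem1 : X (Sum.inr (⟨kk - 1, by omega⟩ : Fin n)) -
          X (Sum.inr (⟨2, by omega⟩ : Fin n)) ^ (kk - 2) ∈ J := by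
        have h := memE' (kk - 1) (by omega) (by omega)
        rwa [show kk - 1 - 1 = kk - 2 from by omega] at h
      have heq : 2 * uP n hn * (C ((kk : ℂ) - 1) *
            (X (Sum.inr (⟨kk - 1, by omega⟩ : Fin n)) -
              X (Sum.inr (⟨2, by omega⟩ : Fin n)) ^ (kk - 2) *
                X (Sum.inr (⟨0, by omega⟩ : Fin n)))) =
          (2 * uP n hn * C ((kk : ℂ) - 1)) *
            (X (Sum.inr (⟨kk - 1, by omega⟩ : Fin n)) -
              X (Sum.inr (⟨2, by omega⟩ : Fin n)) ^ (kk - 2)) -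
          (2 * uP n hn * C ((kk : ℂ) - 1) *
              X (Sum.inr (⟨2, by omega⟩ : Fin n)) ^ (kk - 2)) *
            (X (Sum.inr (⟨0, by omega⟩ : Fin n)) - 1) := by ring
      rw [heq]
      exact sub_mem (Ideal.mul_mem_left _ _ hmem1) (Ideal.mul_mem_left _ _ memA)
  -- main computation: bracketing `u·y₂` against each generator
  have mainC : ∀ z ∈ genSet n hn,
      pb n (uP n hn * X (Sum.inr (⟨2, by omega⟩ : Fin n))) z ∈ J := by
    intro z hz
    have hz' := hz
    simp only [genSet, Set.mem_union, Set.mem_insert_iff, Set.mem_singleton_iff,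
      Set.mem_range] at hz'
    rcases hz' with (rfl | rfl | rfl | rfl) | ⟨k, rfl⟩
    · rw [hCleft, pb_YP ypy2 ypA, pb_u_A n hn, mul_zero, mul_zero, add_zero]
      exact zero_mem J
    · rw [pb_antisymm]
      exact neg_mem (mainB _ gC)
    · rw [pb_self]; exact zero_mem J
    · rw [hCleft, pb_YP ypy2 ypD, pb_u_D n hn]
      have heq : uP n hn * 0 + X (Sum.inr (⟨2, by omega⟩ : Fin n)) *
            (((n - 1 : ℕ) : MvPolynomial (Fin n ⊕ Fin n) ℂ) *
              X (Sum.inr (⟨2, by omega⟩ : Fin n)) ^ (n - 2) *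
              X (Sum.inr (⟨0, by omega⟩ : Fin n))) =
          (((n - 1 : ℕ) : MvPolynomial (Fin n ⊕ Fin n) ℂ) *
            X (Sum.inr (⟨0, by omega⟩ : Fin n))) *
          (X (Sum.inr (⟨2, by omega⟩ : Fin n)) ^ (n - 2) *
            X (Sum.inr (⟨2, by omega⟩ : Fin n))) := by ring
      rw [heq, ← pow_succ, show n - 2 + 1 = n - 1 from by omega]
      exact Ideal.mul_mem_left _ _ memD
    · obtain ⟨kk, hkmem⟩ := k
      have hb := Finset.mem_Ico.mp hkmem
      rw [hCleft, pb_YP ypy2 (ypE kk hb.2), pb_u_E n hn kk hb.1 hb.2]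
      have hmem1 : X (Sum.inr (⟨kk - 1, by omega⟩ : Fin n)) -
          X (Sum.inr (⟨2, by omega⟩ : Fin n)) ^ (kk - 2) ∈ J := by
        have h := memE' (kk - 1) (by omega) (by omega)
        rwa [show kk - 1 - 1 = kk - 2 from by omega] at h
      have heq : uP n hn * 0 + X (Sum.inr (⟨2, by omega⟩ : Fin n)) *
            (C ((kk : ℂ) - 1) *
              (X (Sum.inr (⟨kk - 1, by omega⟩ : Fin n)) -
                X (Sum.inr (⟨2, by omega⟩ : Fin n)) ^ (kk - 2) *
                  X (Sum.inr (⟨0, by omega⟩ : Fin n)))) =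
          (X (Sum.inr (⟨2, by omega⟩ : Fin n)) * C ((kk : ℂ) - 1)) *
            (X (Sum.inr (⟨kk - 1, by omega⟩ : Fin n)) -
              X (Sum.inr (⟨2, by omega⟩ : Fin n)) ^ (kk - 2)) -
          (X (Sum.inr (⟨2, by omega⟩ : Fin n)) * C ((kk : ℂ) - 1) *
              X (Sum.inr (⟨2, by omega⟩ : Fin n)) ^ (kk - 2)) *
            (X (Sum.inr (⟨0, by omega⟩ : Fin n)) - 1) := by ring
      rw [heq]
      exact sub_mem (Ideal.mul_mem_left _ _ hmem1) (Ideal.mul_mem_left _ _ memA)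
  -- dispatch for Y-pure left arguments
  have dispatchYP : ∀ w ∈ genSet n hn, YP n w → pb n w y ∈ J := by
    intro w hw hwYP
    have hy' := hy
    simp only [genSet, Set.mem_union, Set.mem_insert_iff, Set.mem_singleton_iff,
      Set.mem_range] at hy'
    rcases hy' with (rfl | rfl | rfl | rfl) | ⟨k, rfl⟩
    · rw [pb_YP hwYP ypA]; exact zero_mem J
    · rw [pb_antisymm]; exact neg_mem (mainB w hw)
    · rw [pb_antisymm]; exact neg_mem (mainC w hw)
    · rw [pb_YP hwYP ypD]; exact zero_mem J
    · obtain ⟨kk, hkmem⟩ := k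
      rw [pb_YP hwYP (ypE kk (Finset.mem_Ico.mp hkmem).2)]
      exact zero_mem J
  have hx' := hx
  simp only [genSet, Set.mem_union, Set.mem_insert_iff, Set.mem_singleton_iff,
    Set.mem_range] at hx'
  rcases hx' with (rfl | rfl | rfl | rfl) | ⟨k, rfl⟩
  · exact dispatchYP _ hx ypA
  · exact mainB y hy
  · exact mainC y hy
  · exact dispatchYP _ hx ypD
  · obtain ⟨kk, hkmem⟩ := k
    exact dispatchYP _ hx (ypE kk (Finset.mem_Ico.mp hkmem).2)

end Main

/-- Second family (2.5.3): the ideal `J` is Poisson-stable. -/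
theorem stmt_13 (n : ℕ) (hn : 3 ≤ n) :
    ∀ a ∈ Jfam2 n hn, ∀ b ∈ Jfam2 n hn, pb n a b ∈ Jfam2 n hn := by
  intro a ha b hb
  rw [Jfam2_eq] at ha hb ⊢
  induction ha, hb using Submodule.span_induction₂ with
  | mem_mem x y hx hy => exact key n hn x hx y hy
  | zero_left y hy => rw [pb_zero_left]; exact zero_mem _
  | zero_right x hx => rw [pb_zero_right]; exact zero_mem _
  | add_left x y z hx hy hz h1 h2 => rw [pb_add_left]; exact add_mem h1 h2
  | add_right x y z hx hy hz h1 h2 => rw [pb_add_right]; exact add_mem h1 h2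
  | smul_left r x y hx hy h =>
    rw [smul_eq_mul, pb_mul_left]
    exact add_mem (Ideal.mul_mem_left _ _ h) (Ideal.mul_mem_right _ _ hx)
  | smul_right r x y hx hy h =>
    rw [smul_eq_mul, pb_mul_right]
    exact add_mem (Ideal.mul_mem_left _ _ h) (Ideal.mul_mem_right _ _ hy)
end
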